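/- arXiv:2306.16549 — 2 statements merged into one kernel-verified Lean document; each statement's English description precedes it below -/
import Mathlib

section
/- If P(Y ≤ u(X)) = 1 for a measurable function u, then u(X) ≥ u*(X) almost surely, where u*(x) is the essential supremum of Y given X = x. -/
open MeasureTheory ProbabilityTheory ENNReal

lemma Iic_inter_empty : (⋂ n : ℕ, Set.Iic (-(n:ℝ))) = ∅ := by
  ext y
  simp only [Set.mem_iInter, Set.mem_Iic, Set.mem_empty_iff_false, iff_false, not_forall, not_le]
  obtain ⟨n, hn⟩ := exists_nat_gt (-y)
  exact ⟨n, by linarith⟩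

lemma bddBelow_full_Iic (ν : Measure ℝ) [IsProbabilityMeasure ν] :
    BddBelow {t : ℝ | ν (Set.Iic t) = 1} := by
  by_contra h
  have hall : ∀ n : ℕ, ν (Set.Iic (-(n:ℝ))) = 1 := by
    intro n
    rw [not_bddBelow_iff] at h
    obtain ⟨t, ht, htn⟩ := h (-(n:ℝ))
    refine le_antisymm (prob_le_one) ?_
    calc (1:ℝ≥0∞) = ν (Set.Iic t) := ht.symm
      _ ≤ ν (Set.Iic (-(n:ℝ))) := measure_mono (Set.Iic_subset_Iic.2 htn.le)
  have hanti : Antitone (fun n : ℕ => Set.Iic (-(n:ℝ))) := by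
    intro i j hij
    exact Set.Iic_subset_Iic.2 (by exact_mod_cast neg_le_neg (Nat.cast_le.2 hij))
  have hinter : ν (⋂ n : ℕ, Set.Iic (-(n:ℝ))) = ⨅ n : ℕ, ν (Set.Iic (-(n:ℝ))) :=
    Directed.measure_iInter (fun n => measurableSet_Iic.nullMeasurableSet)
      hanti.directed_ge ⟨0, measure_ne_top _ _⟩
  rw [Iic_inter_empty] at hinter
  simp only [measure_empty, hall, iInf_const] at hinter
  exact one_ne_zero hinter.symm

/-- if `P(Y ≤ u(X)) = 1` then `u(X) ≥ u*(X)` a.s., where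
`u*(x) = inf { t : P(Y ≤ t | X = x) = 1 }` is defined via a regular conditional
distribution `κ` of `Y` given `X`. -/
theorem ae_ge_conditional_esssup
    {Ω γ : Type*} [MeasurableSpace Ω] [MeasurableSpace γ]
    (μ : Measure Ω) [IsProbabilityMeasure μ]
    (X : Ω → γ) (Y : Ω → ℝ) (hX : Measurable X) (hY : Measurable Y)
    (κ : ProbabilityTheory.Kernel γ ℝ) [IsMarkovKernel κ]
    (hκ : μ.map (fun ω => (X ω, Y ω)) = (μ.map X).compProd κ)
    (ustar : γ → ℝ)
    (hustar : ∀ x, ustar x = sInf {t : ℝ | κ x (Set.Iic t) = 1})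
    (u : γ → ℝ) (hu : Measurable u)
    (hcov : ∀ᵐ ω ∂μ, Y ω ≤ u (X ω)) :
    ∀ᵐ ω ∂μ, ustar (X ω) ≤ u (X ω) := by
  have hXm : IsProbabilityMeasure (μ.map X) := Measure.isProbabilityMeasure_map hX.aemeasurable
  have hset : MeasurableSet {p : γ × ℝ | p.2 ≤ u p.1} :=
    measurableSet_le measurable_snd (hu.comp measurable_fst)
  -- the measure of the set is 1
  have h1 : ((μ.map X).compProd κ) {p : γ × ℝ | p.2 ≤ u p.1} = 1 := by
    rw [← hκ, Measure.map_apply (hX.prodMk hY) hset]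
    have : {ω | (X ω, Y ω) ∈ {p : γ × ℝ | p.2 ≤ u p.1}} = {ω | Y ω ≤ u (X ω)} := rfl
    rw [show (fun ω => (X ω, Y ω)) ⁻¹' {p : γ × ℝ | p.2 ≤ u p.1} = {ω | Y ω ≤ u (X ω)} from rfl]
    have hcm : MeasurableSet {ω | Y ω ≤ u (X ω)} := measurableSet_le hY (hu.comp hX)
    exact (prob_compl_eq_zero_iff (μ := μ) hcm).1 (ae_iff.1 hcov)
  rw [Measure.compProd_apply hset] at h1
  have hpre : ∀ x : γ, (Prod.mk x ⁻¹' {p : γ × ℝ | p.2 ≤ u p.1}) = Set.Iic (u x) := by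
    intro x; ext y; simp [Set.mem_Iic]
  simp_rw [hpre] at h1
  -- a.e. x, κ x (Iic (u x)) = 1
  have hae : ∀ᵐ x ∂(μ.map X), κ x (Set.Iic (u x)) = 1 := by
    have hle : (fun x => κ x (Set.Iic (u x))) ≤ᵐ[μ.map X] (fun _ => 1) :=
      Filter.Eventually.of_forall fun x => prob_le_one
    have hone : ∫⁻ _, (1:ℝ≥0∞) ∂(μ.map X) = 1 := by simp
    have := ae_eq_of_ae_le_of_lintegral_le (μ := μ.map X) hle
      (by rw [h1]; exact ENNReal.one_ne_top) aemeasurable_const (by rw [hone, h1])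
    filter_upwards [this] with x hx using hx
  -- conclude
  have hgoal : ∀ᵐ x ∂(μ.map X), ustar x ≤ u x := by
    filter_upwards [hae] with x hx
    rw [hustar x]
    haveI : IsProbabilityMeasure (κ x) := IsMarkovKernel.isProbabilityMeasure x
    exact csInf_le (bddBelow_full_Iic (κ x)) hx
  exact ae_of_ae_map hX.aemeasurable hgoal
end

section
/- Under the symmetry assumption, E[f_m(X)] ≥ E[f₀(X)] + E[(m(X) - m₀(X))²], where f_m(x) = (√f₀(x) + |m₀(x) - m(x)|)². -/
open MeasureTheory

/-- with `f_m(x) = (√f₀(x) + |m₀(x) - m(x)|)²` and `f₀ ≥ 0`,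
`E[f_m(X)] ≥ E[f₀(X)] + E[(m(X) - m₀(X))²]`. -/
theorem expectation_fm_lower_bound
    {γ : Type*} [MeasurableSpace γ] (ν : Measure γ) [IsProbabilityMeasure ν]
    (f₀ m m₀ : γ → ℝ) (hf₀ : ∀ x, 0 ≤ f₀ x)
    (hint_f₀ : Integrable f₀ ν)
    (hint_sq : Integrable (fun x => (m x - m₀ x) ^ 2) ν)
    (hint_fm : Integrable (fun x => (Real.sqrt (f₀ x) + |m₀ x - m x|) ^ 2) ν) :
    ∫ x, f₀ x ∂ν + ∫ x, (m x - m₀ x) ^ 2 ∂ν ≤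
      ∫ x, (Real.sqrt (f₀ x) + |m₀ x - m x|) ^ 2 ∂ν := by
  rw [← integral_add hint_f₀ hint_sq]
  apply integral_mono (hint_f₀.add hint_sq) hint_fm
  intro x
  have h1 : Real.sqrt (f₀ x) ^ 2 = f₀ x := Real.sq_sqrt (hf₀ x)
  have h2 : |m₀ x - m x| ^ 2 = (m x - m₀ x) ^ 2 := by
    rw [sq_abs]; ring
  have h3 : 0 ≤ 2 * Real.sqrt (f₀ x) * |m₀ x - m x| := by positivity
  simp only [Pi.add_apply]
  nlinarith [Real.sqrt_nonneg (f₀ x), abs_nonneg (m₀ x - m x)]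
end
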